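/- Let n ≥ 2 and let λ be a partition of n with a_1 parts equal to 1. Over the conjugacy class C_λ, the average number of excedances equals (n − a_1)/2, the average number of anti-excedances equals (n − a_1)/2, and the average number of weak excedances equals (n + a_1)/2. -/

import Mathlib

/-- The conjugacy class of `S_n` consisting of permutations of cycle type `lam`
(Mathlib's `cycleType` omits fixed points, so we compare with the parts of `lam` not equal
to `1`). -/
noncomputable def conjClass (n : ℕ) (lam : n.Partition) : Finset (Equiv.Perm (Fin n)) :=
  Finset.univ.filter fun ω => ω.cycleType = Multiset.filter (fun i => i ≠ 1) lam.parts

/-- The number of excedances of a permutation: indices `i` with `ω i > i`. -/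
def exc {n : ℕ} (ω : Equiv.Perm (Fin n)) : ℕ :=
  (Finset.univ.filter fun i : Fin n => i < ω i).card

/-- The number of anti-excedances of a permutation: indices `i` with `ω i < i`. -/
def aexc {n : ℕ} (ω : Equiv.Perm (Fin n)) : ℕ :=
  (Finset.univ.filter fun i : Fin n => ω i < i).card

/-- The number of weak excedances of a permutation: indices `i` with `ω i ≥ i`. -/
def wexc {n : ℕ} (ω : Equiv.Perm (Fin n)) : ℕ :=
  (Finset.univ.filter fun i : Fin n => i ≤ ω i).card

/-!
Reversal `i ↦ n - 1 - i` turns excedances of `ω` into anti-excedances of its conjugate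
`rev ω rev⁻¹`, which has the same cycle type, so on `C_λ` both statistics have the same
average. Their sum is the number of non-fixed points, `n - a₁`, and anti-excedances and weak
excedances together count every index once.
-/

open Finset

lemma Multiset.count_one_add_sum_filter_ne_one (s : Multiset ℕ) :
    s.count 1 + (s.filter (· ≠ 1)).sum = s.sum := by
  conv_rhs => rw [← Multiset.filter_add_not (· = 1) s]
  rw [Multiset.sum_add, Multiset.filter_eq', Multiset.sum_replicate, smul_eq_mul, mul_one]

lemma Finset.sum_div_card_eq_sub_of_add_eq {α : Type*} {s : Finset α} (hs : s.Nonempty)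
    {f g : α → ℝ} {c : ℝ} (h : ∀ x ∈ s, f x + g x = c) :
    (∑ x ∈ s, g x) / #s = c - (∑ x ∈ s, f x) / #s := by
  have hcard : (#s : ℝ) ≠ 0 := by exact_mod_cast hs.card_ne_zero
  have hsum : ∑ x ∈ s, f x + ∑ x ∈ s, g x = c * #s := by
    rw [← sum_add_distrib, sum_congr rfl h, sum_const, nsmul_eq_mul, mul_comm]
  field_simp
  linarith

section Excedances

variable {n : ℕ}

lemma exc_add_aexc (ω : Equiv.Perm (Fin n)) : exc ω + aexc ω = #ω.support := by
  rw [exc, aexc, ← card_union_of_disjoint, ← filter_or]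
  · congr 1
    ext i
    simp [Equiv.Perm.mem_support, lt_or_lt_iff_ne, eq_comm]
  · exact disjoint_filter.mpr fun i _ h₁ h₂ => lt_asymm h₁ h₂

lemma aexc_add_wexc (ω : Equiv.Perm (Fin n)) : aexc ω + wexc ω = n := by
  simpa [aexc, wexc, not_lt] using
    card_filter_add_card_filter_not (s := (univ : Finset (Fin n))) (fun i => ω i < i)

lemma revPerm_conj_apply (ω : Equiv.Perm (Fin n)) (i : Fin n) :
    (Fin.revPerm * ω * Fin.revPerm⁻¹ : Equiv.Perm (Fin n)) i = (ω i.rev).rev := by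
  simp [Equiv.Perm.mul_apply, Equiv.Perm.inv_def]

lemma revPerm_conj_revPerm_conj (ω : Equiv.Perm (Fin n)) :
    Fin.revPerm * (Fin.revPerm * ω * Fin.revPerm⁻¹) * Fin.revPerm⁻¹ = ω := by
  ext i
  simp [revPerm_conj_apply]

lemma exc_revPerm_conj (ω : Equiv.Perm (Fin n)) :
    exc (Fin.revPerm * ω * Fin.revPerm⁻¹) = aexc ω := by
  refine card_nbij' Fin.rev Fin.rev ?_ ?_ (fun i _ => Fin.rev_rev i) (fun i _ => Fin.rev_rev i)
  · intro i hi
    simpa [revPerm_conj_apply, Fin.lt_rev_iff] using hi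
  · intro i hi
    simpa [revPerm_conj_apply, Fin.rev_lt_rev] using hi

end Excedances

section ConjClass

variable {n : ℕ} (lam : n.Partition)

lemma Nat.Partition.count_one_add_sum_filter_ne_one :
    lam.parts.count 1 + (lam.parts.filter (· ≠ 1)).sum = n :=
  (Multiset.count_one_add_sum_filter_ne_one lam.parts).trans lam.parts_sum

lemma conjClass_nonempty : (conjClass n lam).Nonempty := by
  have hsum := lam.count_one_add_sum_filter_ne_one
  obtain ⟨g, hg⟩ := (Equiv.Perm.exists_with_cycleType_iff (Fin n)
    (m := lam.parts.filter (· ≠ 1))).mpr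
    ⟨by rw [Fintype.card_fin]; omega, fun a ha => by
      rw [Multiset.mem_filter] at ha
      have := lam.parts_pos ha.1
      omega⟩
  exact ⟨g, by simp [conjClass, hg]⟩

lemma card_support_of_mem_conjClass {ω : Equiv.Perm (Fin n)} (hω : ω ∈ conjClass n lam) :
    #ω.support = n - lam.parts.count 1 := by
  rw [conjClass, mem_filter] at hω
  rw [← Equiv.Perm.sum_cycleType, hω.2]
  have := lam.count_one_add_sum_filter_ne_one
  omega

lemma conj_mem_conjClass (τ : Equiv.Perm (Fin n)) {ω : Equiv.Perm (Fin n)}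
    (hω : ω ∈ conjClass n lam) : τ * ω * τ⁻¹ ∈ conjClass n lam := by
  rw [conjClass, mem_filter] at hω ⊢
  exact ⟨mem_univ _, by rw [Equiv.Perm.cycleType_conj, hω.2]⟩

lemma sum_exc_conjClass_eq_sum_aexc :
    ∑ ω ∈ conjClass n lam, (exc ω : ℝ) = ∑ ω ∈ conjClass n lam, (aexc ω : ℝ) := by
  refine sum_nbij' (fun ω => Fin.revPerm * ω * Fin.revPerm⁻¹)
    (fun ω => Fin.revPerm * ω * Fin.revPerm⁻¹) (fun _ => conj_mem_conjClass lam _)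
    (fun _ => conj_mem_conjClass lam _) (fun ω _ => revPerm_conj_revPerm_conj ω)
    (fun ω _ => revPerm_conj_revPerm_conj ω) fun ω _ => ?_
  rw [← exc_revPerm_conj (Fin.revPerm * ω * Fin.revPerm⁻¹), revPerm_conj_revPerm_conj]

end ConjClass

theorem stmt10_general (n : ℕ) (lam : n.Partition) (a1 : ℕ)
    (ha1 : a1 = Multiset.count 1 lam.parts) :
    (∑ ω ∈ conjClass n lam, (exc ω : ℝ)) / ((conjClass n lam).card : ℝ)
      = ((n : ℝ) - (a1 : ℝ)) / 2 ∧
    (∑ ω ∈ conjClass n lam, (aexc ω : ℝ)) / ((conjClass n lam).card : ℝ)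
      = ((n : ℝ) - (a1 : ℝ)) / 2 ∧
    (∑ ω ∈ conjClass n lam, (wexc ω : ℝ)) / ((conjClass n lam).card : ℝ)
      = ((n : ℝ) + (a1 : ℝ)) / 2 := by
  have ha1n : a1 ≤ n := by
    have := lam.count_one_add_sum_filter_ne_one
    omega
  have hexc_aexc : ∀ ω ∈ conjClass n lam, (exc ω : ℝ) + aexc ω = n - a1 := fun ω hω => by
    have h := exc_add_aexc ω
    rw [card_support_of_mem_conjClass lam hω, ← ha1] at h
    rw [← Nat.cast_add, h, Nat.cast_sub ha1n]
  have haexc_wexc : ∀ ω ∈ conjClass n lam, (aexc ω : ℝ) + wexc ω = n := fun ω _ =>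
    mod_cast aexc_add_wexc ω
  have hne := conjClass_nonempty lam
  have havg_aexc := sum_div_card_eq_sub_of_add_eq hne hexc_aexc
  rw [sum_exc_conjClass_eq_sum_aexc] at havg_aexc
  have havg : (∑ ω ∈ conjClass n lam, (aexc ω : ℝ)) / #(conjClass n lam) = (n - a1) / 2 := by
    linarith
  refine ⟨sum_exc_conjClass_eq_sum_aexc lam ▸ havg, havg, ?_⟩
  rw [sum_div_card_eq_sub_of_add_eq hne haexc_wexc, havg]
  ring

theorem stmt10 (n : ℕ) (hn : 2 ≤ n) (lam : n.Partition) (a1 : ℕ)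
    (ha1 : a1 = Multiset.count 1 lam.parts) :
    (∑ ω ∈ conjClass n lam, (exc ω : ℝ)) / ((conjClass n lam).card : ℝ)
      = ((n : ℝ) - (a1 : ℝ)) / 2 ∧
    (∑ ω ∈ conjClass n lam, (aexc ω : ℝ)) / ((conjClass n lam).card : ℝ)
      = ((n : ℝ) - (a1 : ℝ)) / 2 ∧
    (∑ ω ∈ conjClass n lam, (wexc ω : ℝ)) / ((conjClass n lam).card : ℝ)
      = ((n : ℝ) + (a1 : ℝ)) / 2 :=
  stmt10_general n lam a1 ha1
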